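/- arXiv:0902.4364 — 3 statements merged into one kernel-verified Lean document; each statement's English description precedes it below -/
import Mathlib

section
/- Let q ≥ 2, n ≥ 1 and let D ⊆ {1,…,n}. The distance graph G(Z_q^n, D) is connected if and only if n ∈ D. -/
/-- The Rosenbloom–Tsfasman weight of a vector in `Z_q^n`:
the largest (1-based) index `i` with `x i ≠ 0`, and `0` for the zero vector. -/
def rtWeight {q n : ℕ} (x : Fin n → ZMod q) : ℕ :=
  (Finset.univ.filter fun i => x i ≠ 0).sup fun i => i.val + 1

/-- The Rosenbloom–Tsfasman distance on `Z_q^n`: `ρ(x,y) = ω(x - y)`. -/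
def rtDist {q n : ℕ} (x y : Fin n → ZMod q) : ℕ := rtWeight (x - y)

/-- The distance graph `G(Z_q^n, D)`: distinct `x, y` are adjacent iff `ρ(x,y) ∈ D`. -/
def rtGraph (q n : ℕ) (D : Finset ℕ) : SimpleGraph (Fin n → ZMod q) :=
  SimpleGraph.fromRel fun x y => rtDist x y ∈ D

lemma rtWeight_le {q n : ℕ} (x : Fin n → ZMod q) : rtWeight x ≤ n :=
  Finset.sup_le fun i _ => i.isLt

lemma rtWeight_eq_iff {q n : ℕ} (hn : 1 ≤ n) (x : Fin n → ZMod q) :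
    rtWeight x = n ↔ x ⟨n - 1, by omega⟩ ≠ 0 := by
  constructor
  · intro h
    have hne : (Finset.univ.filter fun i => x i ≠ 0).Nonempty := by
      by_contra hc
      rw [Finset.not_nonempty_iff_eq_empty] at hc
      rw [rtWeight, hc] at h
      simp at h
      omega
    obtain ⟨i, hi, hsup⟩ := Finset.exists_mem_eq_sup _ hne fun i : Fin n => i.val + 1
    rw [rtWeight, hsup] at h
    have : i = ⟨n - 1, by omega⟩ := by
      apply Fin.ext
      simp only []
      omega
    rw [this] at hi
    exact (Finset.mem_filter.mp hi).2
  · intro h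
    refine le_antisymm (rtWeight_le x) ?_
    have := Finset.le_sup (f := fun i : Fin n => i.val + 1)
      (s := Finset.univ.filter fun i => x i ≠ 0)
      (b := (⟨n - 1, by omega⟩ : Fin n))
      (Finset.mem_filter.mpr ⟨Finset.mem_univ _, h⟩)
    rw [rtWeight]
    simp only [] at this
    omega

/-- The distance graph `G(Z_q^n, D)` is connected iff `n ∈ D`. -/
theorem rtGraph_connected_iff (q n : ℕ) (hq : 2 ≤ q) (hn : 1 ≤ n)
    (D : Finset ℕ) (hD : D ⊆ Finset.Icc 1 n) :
    (rtGraph q n D).Connected ↔ n ∈ D := by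
  haveI : Fact (1 < q) := ⟨hq⟩
  set L : Fin n := ⟨n - 1, by omega⟩ with hL
  have dist_eq : ∀ x y : Fin n → ZMod q, x L ≠ y L → rtDist x y = n := by
    intro x y h
    exact (rtWeight_eq_iff hn _).mpr (by simpa [sub_ne_zero] using h)
  constructor
  · intro hconn
    by_contra hnD
    have hedge : ∀ x y, (rtGraph q n D).Adj x y → x L = y L := by
      intro x y hxy
      rw [rtGraph, SimpleGraph.fromRel_adj] at hxy
      by_contra hLne
      rcases hxy.2 with h | h
      · rw [dist_eq x y hLne] at h; exact hnD h
      · rw [dist_eq y x (Ne.symm hLne)] at h; exact hnD h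
    have hreach : ∀ x y, (rtGraph q n D).Reachable x y → x L = y L := by
      intro x y hr
      obtain ⟨w⟩ := hr
      induction w with
      | nil => rfl
      | cons h p ih => exact (hedge _ _ h).trans ih
    have := hreach 0 (fun _ => 1) (hconn.preconnected _ _)
    simp at this
  · intro hnD
    haveI : Nonempty (Fin n → ZMod q) := ⟨fun _ => 0⟩
    refine ⟨fun x y => ?_⟩
    by_cases hxy : x L = y L
    · by_cases hxeq : x = y
      · exact hxeq ▸ SimpleGraph.Reachable.refl _
      · set z : Fin n → ZMod q := Function.update x L (x L + 1) with hz
        have hzL : z L = x L + 1 := by simp [hz]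
        have hxz : (rtGraph q n D).Adj x z := by
          rw [rtGraph, SimpleGraph.fromRel_adj]
          refine ⟨?_, Or.inl ?_⟩
          · intro hc
            have := congrFun hc L
            rw [hzL] at this
            exact one_ne_zero (by linear_combination -this)
          · rw [dist_eq x z (by rw [hzL]; intro hc; exact one_ne_zero (by linear_combination -hc))]
            exact hnD
        have hzy : (rtGraph q n D).Adj z y := by
          rw [rtGraph, SimpleGraph.fromRel_adj]
          have hne : z L ≠ y L := by
            rw [hzL, ← hxy]
            intro hc
            exact one_ne_zero (by linear_combination hc)
          refine ⟨fun hc => hne (congrFun hc L), Or.inl ?_⟩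
          rw [dist_eq z y hne]
          exact hnD
        exact hxz.reachable.trans hzy.reachable
    · have : (rtGraph q n D).Adj x y := by
        rw [rtGraph, SimpleGraph.fromRel_adj]
        exact ⟨fun hc => hxy (congrFun hc L), Or.inl (by rw [dist_eq x y hxy]; exact hnD)⟩
      exact this.reachable
end

section
/- Let q ≥ 2, n ≥ 1 and let D ⊆ {1,…,n} with |D| = k. The chromatic number of the distance graph G(Z_q^n, D) equals q^k. -/
def rtExt {q n : ℕ} (S : Finset (Fin n)) (f : {i // i ∈ S} → ZMod q) :
    Fin n → ZMod q := fun i => if h : i ∈ S then f ⟨i, h⟩ else 0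

lemma rtWeight_attained {q n : ℕ} {z : Fin n → ZMod q} (hz : z ≠ 0) :
    ∃ i, z i ≠ 0 ∧ rtWeight z = i.val + 1 := by
  have hne : (Finset.univ.filter fun i => z i ≠ 0).Nonempty := by
    rw [Finset.filter_nonempty_iff]
    by_contra h
    push_neg at h
    exact hz (funext fun i => by simpa using h i (Finset.mem_univ i))
  obtain ⟨i, hi, hsup⟩ := Finset.exists_mem_eq_sup _ hne (fun i : Fin n => i.val + 1)
  exact ⟨i, (Finset.mem_filter.mp hi).2, hsup⟩

/-- The chromatic number of the distance graph `G(Z_q^n, D)` is `q ^ |D|`. -/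
theorem rtGraph_chromaticNumber (q n : ℕ) (hq : 2 ≤ q) (hn : 1 ≤ n)
    (D : Finset ℕ) (hD : D ⊆ Finset.Icc 1 n) :
    (rtGraph q n D).chromaticNumber = (q ^ D.card : ℕ) := by
  haveI : NeZero q := ⟨by omega⟩
  set S : Finset (Fin n) := Finset.univ.filter (fun i => i.val + 1 ∈ D) with hS
  have hmemS : ∀ i : Fin n, i ∈ S ↔ i.val + 1 ∈ D := by
    intro i; simp [hS]
  have hScard : S.card = D.card := by
    apply Finset.card_bij (fun i _ => i.val + 1)
    · intro i hi; exact (hmemS i).mp hi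
    · intro a ha b hb h
      exact Fin.ext (by omega)
    · intro d hd
      have := hD hd
      rw [Finset.mem_Icc] at this
      refine ⟨⟨d - 1, by omega⟩, (hmemS _).mpr ?_, by simp; omega⟩
      simpa using (by simpa using (show d - 1 + 1 = d by omega) ▸ hd : d - 1 + 1 ∈ D)
  -- membership ∈ D of rtDist for vectors differing only on S
  have key : ∀ x y : Fin n → ZMod q, x ≠ y → (∀ i, i ∉ S → x i = y i) →
      rtDist x y ∈ D := by
    intro x y hxy hsupp
    have hz : x - y ≠ 0 := sub_ne_zero.mpr hxy
    obtain ⟨i, hi, hw⟩ := rtWeight_attained hz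
    have : i ∈ S := by
      by_contra h
      exact hi (by simp [Pi.sub_apply, hsupp i h])
    rw [rtDist, hw]
    exact (hmemS i).mp this
  -- Upper bound: coloring by restriction to S
  have hcol : (rtGraph q n D).Colorable (q ^ D.card) := by
    have C : (rtGraph q n D).Coloring ({i // i ∈ S} → ZMod q) := by
      refine SimpleGraph.Coloring.mk (fun x i => x i.val) ?_
      intro x y hadj heq
      rw [rtGraph, SimpleGraph.fromRel_adj] at hadj
      obtain ⟨hne, hmem⟩ := hadj
      have hmem' : rtDist x y ∈ D := by
        rcases hmem with h | h
        · exact h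
        · rwa [rtDist, show x - y = -(y - x) by ring, rtWeight,
            show (Finset.univ.filter fun i => (-(y-x)) i ≠ 0)
              = Finset.univ.filter fun i => (y-x) i ≠ 0 by
              apply Finset.filter_congr; intro i _
              simp [sub_eq_zero, eq_comm]]
      have hz : x - y ≠ 0 := sub_ne_zero.mpr hne
      obtain ⟨i, hi, hw⟩ := rtWeight_attained hz
      have hiS : i ∈ S := by
        rw [hmemS]
        rw [rtDist] at hmem'
        rwa [hw] at hmem'
      have := congrFun heq ⟨i, hiS⟩
      exact hi (by simpa [sub_eq_zero] using this)
    have := C.colorable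
    rwa [show Fintype.card ({i // i ∈ S} → ZMod q) = q ^ D.card by
      rw [Fintype.card_fun, ZMod.card, Fintype.card_coe, hScard]] at this
  -- Lower bound: clique of vectors supported on S
  set e := @rtExt q n S with he
  have he_inj : Function.Injective e := by
    intro f g h
    funext i
    have := congrFun h i.val
    simpa [he, rtExt, i.prop] using this
  have hclique : (rtGraph q n D).IsClique (Finset.univ.image e) := by
    intro x hx y hy hxy
    simp only [Finset.coe_image, Set.mem_image] at hx hy
    obtain ⟨f, _, rfl⟩ := hx
    obtain ⟨g, _, rfl⟩ := hy
    rw [rtGraph, SimpleGraph.fromRel_adj]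
    refine ⟨hxy, Or.inl (key _ _ hxy ?_)⟩
    intro i hi
    simp [he, rtExt, hi]
  have hle := hclique.card_le_chromaticNumber
  rw [Finset.card_image_of_injective _ he_inj, Finset.card_univ,
    Fintype.card_fun, ZMod.card, Fintype.card_coe, hScard] at hle
  exact le_antisymm hcol.chromaticNumber_le hle
end

section
/- Let n ≥ 2 and let D ⊆ {2,…,n}. The distance graph G(S_n, D) is connected if and only if n ∈ D. -/
/-- The Rosenbloom–Tsfasman weight of a permutation `σ` of `{1,…,n}`:
the largest (1-based) index `i` with `σ(i) ≠ i`, and `0` for the identity. -/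
def permRTWeight {n : ℕ} (σ : Equiv.Perm (Fin n)) : ℕ :=
  (Finset.univ.filter fun i => σ i ≠ i).sup fun i => i.val + 1

/-- The Rosenbloom–Tsfasman distance on `S_n`: `ρ(α,β) = ω(α⁻¹β)`. -/
def permRTDist {n : ℕ} (α β : Equiv.Perm (Fin n)) : ℕ := permRTWeight (α⁻¹ * β)

/-- The distance graph `G(S_n, D)`: distinct `α, β` are adjacent iff `ρ(α,β) ∈ D`. -/
def permRTGraph (n : ℕ) (D : Finset ℕ) : SimpleGraph (Equiv.Perm (Fin n)) :=
  SimpleGraph.fromRel fun α β => permRTDist α β ∈ D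

lemma permRTWeight_le {n : ℕ} (σ : Equiv.Perm (Fin n)) : permRTWeight σ ≤ n :=
  Finset.sup_le fun i _ => i.isLt

lemma permRTWeight_eq_n {n : ℕ} (hn : 1 ≤ n) (σ : Equiv.Perm (Fin n))
    (h : σ ⟨n-1, by omega⟩ ≠ ⟨n-1, by omega⟩) : permRTWeight σ = n := by
  have hm : (⟨n-1, by omega⟩ : Fin n) ∈ Finset.univ.filter fun i => σ i ≠ i :=
    Finset.mem_filter.mpr ⟨Finset.mem_univ _, h⟩
  have h1 : (n-1) + 1 ≤ permRTWeight σ :=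
    Finset.le_sup (f := fun i : Fin n => i.val + 1) hm
  have h2 := permRTWeight_le σ
  omega

lemma fix_of_permRTWeight_ne {n : ℕ} (hn : 1 ≤ n) (σ : Equiv.Perm (Fin n))
    (h : permRTWeight σ ≠ n) : σ ⟨n-1, by omega⟩ = ⟨n-1, by omega⟩ := by
  by_contra hc; exact h (permRTWeight_eq_n hn σ hc)

/-- The distance graph `G(S_n, D)` is connected iff `n ∈ D`. -/
theorem permRTGraph_connected_iff (n : ℕ) (hn : 2 ≤ n)
    (D : Finset ℕ) (hD : D ⊆ Finset.Icc 2 n) :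
    (permRTGraph n D).Connected ↔ n ∈ D := by
  haveI : NeZero n := ⟨by omega⟩
  set L : Fin n := ⟨n-1, by omega⟩ with hLdef
  have hL0 : (0 : Fin n) ≠ L := by
    intro e
    have := congrArg Fin.val e
    simp [hLdef] at this
    omega
  have hswap : Equiv.swap (0 : Fin n) L L = 0 := Equiv.swap_apply_right _ _
  constructor
  · intro hc
    by_contra hnD
    have key : ∀ a b : Equiv.Perm (Fin n), (permRTGraph n D).Adj a b → a L = b L := by
      intro a b hab
      rw [permRTGraph, SimpleGraph.fromRel_adj] at hab
      obtain ⟨hne, h | h⟩ := hab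
      · have h2 : permRTWeight (a⁻¹ * b) ≠ n := fun e => hnD (e ▸ h)
        have h3 : (a⁻¹ * b) L = L := fix_of_permRTWeight_ne (by omega) _ h2
        have h4 : a⁻¹ (b L) = L := h3
        have := congrArg a h4
        simpa using this.symm
      · have h2 : permRTWeight (b⁻¹ * a) ≠ n := fun e => hnD (e ▸ h)
        have h3 : (b⁻¹ * a) L = L := fix_of_permRTWeight_ne (by omega) _ h2
        have h4 : b⁻¹ (a L) = L := h3
        have := congrArg b h4
        simpa using this
    have inv : ∀ a b : Equiv.Perm (Fin n), (permRTGraph n D).Reachable a b → a L = b L := by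
      intro a b h
      obtain ⟨w⟩ := h
      induction w with
      | nil => rfl
      | cons h _ ih => exact (key _ _ h).trans ih
    have hreach := inv 1 (Equiv.swap 0 L) (hc.preconnected 1 _)
    rw [Equiv.Perm.one_apply, hswap] at hreach
    exact hL0 hreach.symm
  · intro hnD
    have adj_of : ∀ a b : Equiv.Perm (Fin n), (a⁻¹ * b) L ≠ L → (permRTGraph n D).Adj a b := by
      intro a b h
      rw [permRTGraph, SimpleGraph.fromRel_adj]
      refine ⟨?_, Or.inl ?_⟩
      · intro e; subst e; simp at h
      · have := permRTWeight_eq_n (by omega) (a⁻¹ * b) h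
        rw [permRTDist, this]; exact hnD
    rw [SimpleGraph.connected_iff]
    refine ⟨fun a b => ?_, inferInstance⟩
    by_cases hfix : (a⁻¹ * b) L = L
    · have h1 : (permRTGraph n D).Adj a (a * Equiv.swap 0 L) := by
        apply adj_of
        rw [show a⁻¹ * (a * Equiv.swap 0 L) = Equiv.swap 0 L by group, hswap]
        exact hL0
      have h2 : (permRTGraph n D).Adj (a * Equiv.swap 0 L) b := by
        apply adj_of
        have he : (a * Equiv.swap 0 L)⁻¹ * b = Equiv.swap 0 L * (a⁻¹ * b) := by
          rw [mul_inv_rev, Equiv.swap_inv]; group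
        rw [he, Equiv.Perm.mul_apply, hfix, hswap]
        exact hL0
      exact h1.reachable.trans h2.reachable
    · exact (adj_of a b hfix).reachable
end
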